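/- arXiv:1707.04893 — 4 statements merged into one kernel-verified Lean document; each statement's English description precedes it below -/
import Mathlib

section
/- Let $d_1,d_2\in\mathbb{N}$, let $A$ be a real $d_1\times d_1$ matrix, $B$ a real $d_1\times d_2$ matrix, $T>0$, and let $\alpha_1,\alpha_2:[0,T]\to\mathbb{R}$ be continuous with $\alpha_1(0)=1$, $\alpha_1(T)=0$, $\alpha_2(0)=\alpha_2(T)=0$. Assume the matrix $U_T:=\int_0^T \alpha_2(s)\,e^{(T-s)A}BB^{*}e^{(T-s)A^{*}}\,ds$ is invertible. For $v_1\in\mathbb{R}^{d_1}$, $v_2\in\mathbb{R}^{d_2}$ define $\tilde g(t):=\alpha_1(t)v_2-\alpha_2(t)B^{*}e^{(T-t)A^{*}}U_T^{-1}\big(e^{TA}v_1+\int_0^T\alpha_1(s)e^{(T-s)A}Bv_2\,ds\big)$ and $g(t):=e^{tA}v_1+\int_0^t e^{(t-s)A}B\tilde g(s)\,ds$. Then $g(T)=0$, $\tilde g(0)=v_2$ and $\tilde g(T)=0$. -/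
/-!
Substituting `g̃` into the variation-of-constants formula splits `g(T)` into
`e^{TA} v₁ + ∫ α₁(s) e^{(T-s)A} B v₂ ds =: w` minus the contribution of the `α₂`-part of the
control, which is `(∫ α₂(s) e^{(T-s)A} B Bᵀ e^{(T-s)Aᵀ} ds) U⁻¹ w = U U⁻¹ w = w`.
The endpoint values of `g̃` are read off from those of `α₁` and `α₂`.
-/

open MeasureTheory Matrix

theorem Matrix.continuous_exp {m : Type*} [Fintype m] [DecidableEq m] :
    Continuous (NormedSpace.exp : Matrix m m ℝ → Matrix m m ℝ) := by
  -- Any norm inducing the product topology will do; the `L∞` operator norm is submultiplicative.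
  let := Matrix.linftyOpNormedAddCommGroup (m := m) (n := m) (α := ℝ)
  let := Matrix.linftyOpNormedSpace (m := m) (n := m) (R := ℝ) (α := ℝ)
  let := Matrix.linftyOpNormedRing (n := m) (α := ℝ)
  let := Matrix.linftyOpNormedAlgebra (n := m) (R := ℚ) (α := ℝ)
  exact NormedSpace.exp_continuous

section IntervalIntegral

variable {μ : Measure ℝ} {a b : ℝ}

theorem intervalIntegrable_pi_iff {ι E : Type*} [Fintype ι] [NormedAddCommGroup E]
    {f : ℝ → ι → E} :
    IntervalIntegrable f μ a b ↔ ∀ i, IntervalIntegrable (f · i) μ a b := by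
  simp only [intervalIntegrable_iff, IntegrableOn, integrable_pi_iff]

theorem intervalIntegral.eval_integral {ι E : Type*} [Fintype ι] [NormedAddCommGroup E]
    [NormedSpace ℝ E] [CompleteSpace E] {f : ℝ → ι → E} (hf : IntervalIntegrable f μ a b)
    (i : ι) : (∫ x in a..b, f x ∂μ) i = ∫ x in a..b, f x i ∂μ :=
  ((ContinuousLinearMap.proj (R := ℝ) i).intervalIntegral_comp_comm hf).symm

variable {m n : Type*} [Fintype m] [Fintype n] {M : ℝ → Matrix m n ℝ}

theorem IntervalIntegrable.mulVec_of_entries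
    (hM : ∀ i j, IntervalIntegrable (fun s ↦ M s i j) μ a b) (c : n → ℝ) :
    IntervalIntegrable (fun s ↦ M s *ᵥ c) μ a b :=
  intervalIntegrable_pi_iff.2 fun i ↦ by
    simpa only [mulVec, dotProduct, Finset.sum_fn] using
      IntervalIntegrable.sum Finset.univ fun j _ ↦ (hM i j).mul_const (c j)

theorem intervalIntegral.integral_mulVec
    (hM : ∀ i j, IntervalIntegrable (fun s ↦ M s i j) μ a b) (c : n → ℝ) :
    ∫ s in a..b, M s *ᵥ c ∂μ = (of fun i j ↦ ∫ s in a..b, M s i j ∂μ) *ᵥ c := by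
  ext i
  rw [intervalIntegral.eval_integral (IntervalIntegrable.mulVec_of_entries hM c)]
  simp only [mulVec, dotProduct, of_apply]
  rw [intervalIntegral.integral_finsetSum fun j _ ↦ (hM i j).mul_const (c j)]
  simp only [intervalIntegral.integral_mul_const]

end IntervalIntegral

/-- The key algebraic identity in the proof of Theorem 3.2: the control `gtil`
steers the linear system to zero at time `T`. -/
theorem stmt_0 (d₁ d₂ : ℕ)
    (A : Matrix (Fin d₁) (Fin d₁) ℝ) (B : Matrix (Fin d₁) (Fin d₂) ℝ)
    (T : ℝ) (hT : 0 < T)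
    (α₁ α₂ : ℝ → ℝ)
    (hα₁c : ContinuousOn α₁ (Set.Icc 0 T)) (hα₂c : ContinuousOn α₂ (Set.Icc 0 T))
    (hα₁0 : α₁ 0 = 1) (hα₁T : α₁ T = 0) (hα₂0 : α₂ 0 = 0) (hα₂T : α₂ T = 0)
    (U : Matrix (Fin d₁) (Fin d₁) ℝ)
    (hU : U = Matrix.of fun i j => ∫ s in (0:ℝ)..T,
      α₂ s * ((NormedSpace.exp ((T - s) • A) * B * Bᵀ *
        NormedSpace.exp ((T - s) • Aᵀ)) i j))
    (hUinv : IsUnit U)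
    (v₁ : Fin d₁ → ℝ) (v₂ : Fin d₂ → ℝ)
    (gtil : ℝ → Fin d₂ → ℝ)
    (hgtil : ∀ t, gtil t = α₁ t • v₂ -
      α₂ t • (Bᵀ.mulVec ((NormedSpace.exp ((T - t) • Aᵀ)).mulVec
        (U⁻¹.mulVec ((NormedSpace.exp (T • A)).mulVec v₁ +
          ∫ s in (0:ℝ)..T, α₁ s • (NormedSpace.exp ((T - s) • A)).mulVec (B.mulVec v₂))))))
    (g : ℝ → Fin d₁ → ℝ)
    (hg : ∀ t, g t = (NormedSpace.exp (t • A)).mulVec v₁ +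
      ∫ s in (0:ℝ)..t, (NormedSpace.exp ((t - s) • A)).mulVec (B.mulVec (gtil s))) :
    g T = 0 ∧ gtil 0 = v₂ ∧ gtil T = 0 := by
  refine ⟨?_, by simp [hgtil, hα₁0, hα₂0], by simp [hgtil, hα₁T, hα₂T]⟩
  set Φ : ℝ → Matrix (Fin d₁) (Fin d₁) ℝ := fun s ↦ NormedSpace.exp ((T - s) • A)
  set G : ℝ → Matrix (Fin d₁) (Fin d₁) ℝ := fun s ↦
    α₂ s • (Φ s * B * Bᵀ * NormedSpace.exp ((T - s) • Aᵀ))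
  set w := NormedSpace.exp (T • A) *ᵥ v₁ + ∫ s in (0:ℝ)..T, α₁ s • Φ s *ᵥ (B *ᵥ v₂) with hw
  have hcont : ∀ M : Matrix (Fin d₁) (Fin d₁) ℝ,
      Continuous fun s : ℝ ↦ NormedSpace.exp ((T - s) • M) := fun M ↦
    Matrix.continuous_exp.comp ((continuous_const.sub continuous_id).smul continuous_const)
  have hIcc : Set.uIcc 0 T = Set.Icc 0 T := Set.uIcc_of_le hT.le
  have hα₁part : IntervalIntegrable (fun s ↦ α₁ s • Φ s *ᵥ (B *ᵥ v₂)) volume 0 T :=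
    ContinuousOn.intervalIntegrable <| hIcc ▸
      hα₁c.smul ((hcont A).matrix_mulVec continuous_const).continuousOn
  have hG : ∀ i j, IntervalIntegrable (fun s ↦ G s i j) volume 0 T := fun i j ↦
    ContinuousOn.intervalIntegrable <| hIcc ▸ hα₂c.mul
      (((((hcont A).matrix_mul continuous_const).matrix_mul continuous_const).matrix_mul
        (hcont Aᵀ)).matrix_elem i j).continuousOn
  have hUG : U = of fun i j ↦ ∫ s in (0:ℝ)..T, G s i j := hU
  have hsteer : ∫ s in (0:ℝ)..T, G s *ᵥ (U⁻¹ *ᵥ w) = w := by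
    rw [intervalIntegral.integral_mulVec hG, ← hUG, mulVec_mulVec,
      mul_nonsing_inv U ((isUnit_iff_isUnit_det U).mp hUinv), one_mulVec]
  have hsplit : ∀ s, Φ s *ᵥ (B *ᵥ gtil s) = α₁ s • Φ s *ᵥ (B *ᵥ v₂) - G s *ᵥ (U⁻¹ *ᵥ w) := by
    intro s
    simp only [hgtil s, G, mulVec_sub, mulVec_smul, smul_mulVec, ← mulVec_mulVec]
  rw [hg T, funext hsplit, intervalIntegral.integral_sub hα₁part
    (IntervalIntegrable.mulVec_of_entries hG _), hsteer, hw]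
  abel
end

section
/- Let $T>0$, $L\geq0$, $\lambda\in(0,1]$, $M\geq0$ and $z\in\mathbb{R}^m$. Let $F:[0,T]\times\mathbb{R}^m\to\mathbb{R}^m$ be measurable with $|F(t,z_1)-F(t,z_2)|\leq L|z_1-z_2|$ and $|F(t,0)|\leq L$ for all $t\in[0,T]$, $z_1,z_2\in\mathbb{R}^m$, and let $G:[0,T]\to\mathbb{R}^m$ satisfy $G(0)=0$ and $|G(t)-G(s)|\leq M|t-s|^{\lambda}$ for all $s,t\in[0,T]$. If $Z:[0,T]\to\mathbb{R}^m$ is continuous and satisfies $Z_t=z+\int_0^t F(s,Z_s)\,ds+G(t)$ for all $t\in[0,T]$, then there exists a constant $C>0$, depending only on $T$, $L$ and $\lambda$, such that $|Z_t-Z_s|\leq C\,(1+|z|)\big(|t-s|+M|t-s|^{\lambda}\big)$ for all $s,t\in[0,T]$. -/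
/-!
Since `F` grows at most linearly, `‖Z t‖ ≤ ‖z‖ + L T + M T^λ + L ∫₀ᵗ ‖Z‖`, and the
integral form of Grönwall's inequality bounds `Z` uniformly by `(‖z‖ + L T + M T^λ) e^{L T}`.
The increment `Z t - Z s = ∫ₛᵗ F(u, Z u) du + (G t - G s)` is then at most
`L (1 + sup ‖Z‖) |t - s| + M |t - s|^λ`, and the term `M T^λ |t - s|` coming from the uniform
bound is absorbed into `M T |t - s|^λ` because `|t - s| ≤ T`.
-/

open MeasureTheory Set Real Topology

theorem rpow_mul_le_mul_rpow {d T lam : ℝ} (hd : 0 ≤ d) (hdT : d ≤ T) (hlam : lam ≤ 1) :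
    T ^ lam * d ≤ T * d ^ lam := by
  rcases hdT.lt_or_eq with hdT | rfl
  · have hT : 0 < T := hd.trans_lt hdT
    have h := self_le_rpow_of_le_one (div_nonneg hd hT.le) ((div_le_one hT).2 hdT.le) hlam
    rw [div_rpow hd hT.le, div_le_div_iff₀ hT (rpow_pos_of_pos hT lam)] at h
    linarith
  · exact (mul_comm _ _).le

theorem le_mul_exp_of_le_add_mul_integral {φ : ℝ → ℝ} {A K T : ℝ}
    (hφ : ContinuousOn φ (Icc 0 T)) (hK : 0 ≤ K)
    (h : ∀ u ∈ Icc 0 T, φ u ≤ A + K * ∫ x in (0:ℝ)..u, φ x) :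
    ∀ u ∈ Icc 0 T, φ u ≤ A * exp (K * u) := by
  intro u hu
  have hint : IntegrableOn φ (Icc 0 T) := hφ.integrableOn_Icc
  have hprim_cont : ContinuousOn (fun x => ∫ y in (0:ℝ)..x, φ y) (Icc 0 T) := by
    simpa [uIcc_of_le (hu.1.trans hu.2)] using
      intervalIntegral.continuousOn_primitive_interval (a := 0) (b := T) (f := φ)
        (by simpa [uIcc_of_le (hu.1.trans hu.2)] using hint)
  have hprim_deriv : ∀ x ∈ Ico 0 T,
      HasDerivWithinAt (fun x => ∫ y in (0:ℝ)..x, φ y) (φ x) (Ici x) x := by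
    intro x hx
    have hnhds : Icc 0 T ∈ 𝓝[>] x := Icc_mem_nhdsGT_of_mem hx
    exact intervalIntegral.integral_hasDerivWithinAt_right
      (hint.mono_set (uIcc_subset_Icc ⟨le_rfl, hx.1.trans hx.2.le⟩
        (Ico_subset_Icc_self hx))).intervalIntegrable
      ((hφ.stronglyMeasurableAtFilter_nhdsWithin measurableSet_Icc x).filter_mono
        (nhdsWithin_le_of_mem hnhds))
      ((hφ x (Ico_subset_Icc_self hx)).mono_of_mem_nhdsWithin hnhds)
  -- Grönwall's differential inequality for the primitive, whose derivative `φ` is bounded by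
  -- `A + K * primitive`.
  have hprim_le := le_gronwallBound_of_liminf_deriv_right_le (δ := 0) hprim_cont
    (fun x hx _ hr => (hprim_deriv x hx).liminf_right_slope_le hr)
    (by simp) (fun x hx => (h x (Ico_subset_Icc_self hx)).trans_eq (add_comm _ _)) u hu
  rw [sub_zero] at hprim_le
  calc φ u ≤ A + K * gronwallBound 0 K A u := (h u hu).trans (by gcongr)
    _ = A * exp (K * u) := by
      rcases eq_or_ne K 0 with rfl | hK0
      · simp
      · rw [gronwallBound_of_K_ne_0 hK0]
        field_simp
        ring

section

variable {E E' : Type*} [NormedAddCommGroup E] [NormedAddCommGroup E']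

theorem norm_le_mul_one_add_norm {f : E → E'} {L : ℝ} (hf : ∀ x y, ‖f x - f y‖ ≤ L * ‖x - y‖)
    (hf0 : ‖f 0‖ ≤ L) (x : E) : ‖f x‖ ≤ L * (1 + ‖x‖) :=
  calc ‖f x‖ ≤ ‖f x - f 0‖ + ‖f 0‖ := norm_le_norm_sub_add _ _
    _ ≤ L * ‖x - 0‖ + L := add_le_add (hf x 0) hf0
    _ = L * (1 + ‖x‖) := by rw [sub_zero]; ring

theorem integrableOn_Icc_of_norm_le_mul_one_add_norm [MeasurableSpace E] [BorelSpace E]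
    [MeasurableSpace E'] [BorelSpace E'] [SecondCountableTopology E']
    {F : ℝ → E → E'} {Z : ℝ → E} {a b L : ℝ}
    (hF : Measurable (Function.uncurry F))
    (hgrowth : ∀ t ∈ Icc a b, ∀ x, ‖F t x‖ ≤ L * (1 + ‖x‖))
    (hZ : ContinuousOn Z (Icc a b)) : IntegrableOn (fun t => F t (Z t)) (Icc a b) := by
  obtain ⟨K, hK⟩ := isCompact_Icc.exists_bound_of_continuousOn hZ
  have hmeas : AEStronglyMeasurable (fun t => F t (Z t)) (volume.restrict (Icc a b)) :=
    (hF.comp_aemeasurable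
      (aemeasurable_id.prodMk (hZ.aemeasurable measurableSet_Icc))).aestronglyMeasurable
  refine Integrable.mono' (integrable_const (|L| * (1 + K))) hmeas ?_
  filter_upwards [ae_restrict_mem measurableSet_Icc] with t ht
  calc ‖F t (Z t)‖ ≤ L * (1 + ‖Z t‖) := hgrowth t ht _
    _ ≤ |L| * (1 + ‖Z t‖) := by gcongr; exact le_abs_self L
    _ ≤ |L| * (1 + K) := by gcongr; exact hK t ht

variable [NormedSpace ℝ E] {F : ℝ → E → E} {Z G : ℝ → E} {z : E} {T L : ℝ}

theorem norm_le_of_eq_add_integral_add {B : ℝ} (hL : 0 ≤ L)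
    (hgrowth : ∀ t ∈ Icc 0 T, ∀ x, ‖F t x‖ ≤ L * (1 + ‖x‖))
    (hint : IntegrableOn (fun t => F t (Z t)) (Icc 0 T)) (hZ : ContinuousOn Z (Icc 0 T))
    (hG : ∀ t ∈ Icc 0 T, ‖G t‖ ≤ B)
    (hZeq : ∀ t ∈ Icc 0 T, Z t = z + (∫ s in (0:ℝ)..t, F s (Z s)) + G t) :
    ∀ t ∈ Icc 0 T, ‖Z t‖ ≤ (‖z‖ + L * T + B) * exp (L * T) := by
  have hself : ∀ t ∈ Icc 0 T, ‖Z t‖ ≤ ‖z‖ + L * T + B + L * ∫ s in (0:ℝ)..t, ‖Z s‖ := by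
    intro t ht
    have hsub : Icc 0 t ⊆ Icc 0 T := Icc_subset_Icc_right ht.2
    have hintegral : ‖∫ s in (0:ℝ)..t, F s (Z s)‖ ≤ L * T + L * ∫ s in (0:ℝ)..t, ‖Z s‖ :=
      calc ‖∫ s in (0:ℝ)..t, F s (Z s)‖ ≤ ∫ s in (0:ℝ)..t, ‖F s (Z s)‖ :=
            intervalIntegral.norm_integral_le_integral_norm ht.1
        _ ≤ ∫ s in (0:ℝ)..t, (L + L * ‖Z s‖) := by
            refine intervalIntegral.integral_mono_on ht.1
              ((intervalIntegrable_iff_integrableOn_Icc_of_le ht.1).2 (hint.mono_set hsub)).norm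
              ?_ fun s hs => ?_
            · exact (continuousOn_const.add (continuousOn_const.mul (hZ.mono hsub).norm)
                ).intervalIntegrable_of_Icc ht.1
            · simpa [mul_add] using hgrowth s (hsub hs) (Z s)
        _ = L * t + L * ∫ s in (0:ℝ)..t, ‖Z s‖ := by
            rw [intervalIntegral.integral_add intervalIntegrable_const
              (((hZ.mono hsub).norm.intervalIntegrable_of_Icc ht.1).const_mul L),
              intervalIntegral.integral_const, intervalIntegral.integral_const_mul, smul_eq_mul,
              sub_zero, mul_comm]
        _ ≤ L * T + L * ∫ s in (0:ℝ)..t, ‖Z s‖ := by gcongr; exact ht.2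
    calc ‖Z t‖ ≤ ‖z‖ + ‖∫ s in (0:ℝ)..t, F s (Z s)‖ + ‖G t‖ := by
          rw [hZeq t ht]; exact norm_add₃_le
      _ ≤ ‖z‖ + L * T + B + L * ∫ s in (0:ℝ)..t, ‖Z s‖ := by linarith [hG t ht]
  intro t ht
  have hA : 0 ≤ ‖z‖ + L * T + B := by
    have := (norm_nonneg _).trans (hG t ht)
    have := ht.1.trans ht.2
    positivity
  exact (le_mul_exp_of_le_add_mul_integral hZ.norm hL hself t ht).trans
    (by gcongr; exact ht.2)

theorem norm_sub_le_of_eq_add_integral_add {K : ℝ} (hL : 0 ≤ L)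
    (hgrowth : ∀ t ∈ Icc 0 T, ∀ x, ‖F t x‖ ≤ L * (1 + ‖x‖))
    (hint : IntegrableOn (fun t => F t (Z t)) (Icc 0 T)) (hK : ∀ t ∈ Icc 0 T, ‖Z t‖ ≤ K)
    (hZeq : ∀ t ∈ Icc 0 T, Z t = z + (∫ s in (0:ℝ)..t, F s (Z s)) + G t)
    {s t : ℝ} (hs : s ∈ Icc 0 T) (ht : t ∈ Icc 0 T) :
    ‖Z t - Z s‖ ≤ L * (1 + K) * |t - s| + ‖G t - G s‖ := by
  have hii : ∀ u ∈ Icc 0 T, IntervalIntegrable (fun t => F t (Z t)) volume 0 u := fun u hu =>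
    (hint.mono_set (uIcc_subset_Icc ⟨le_rfl, hu.1.trans hu.2⟩ hu)).intervalIntegrable
  have hincr : Z t - Z s = (∫ u in s..t, F u (Z u)) + (G t - G s) := by
    rw [hZeq t ht, hZeq s hs, ← intervalIntegral.integral_interval_sub_left (hii t ht) (hii s hs)]
    abel
  have hbound : ∀ u ∈ uIoc s t, ‖F u (Z u)‖ ≤ L * (1 + K) := by
    intro u hu
    have hu' : u ∈ Icc 0 T := uIcc_subset_Icc hs ht (uIoc_subset_uIcc hu)
    calc ‖F u (Z u)‖ ≤ L * (1 + ‖Z u‖) := hgrowth u hu' _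
      _ ≤ L * (1 + K) := by gcongr; exact hK u hu'
  rw [hincr]
  exact (norm_add_le _ _).trans
    (add_le_add (intervalIntegral.norm_integral_le_of_norm_le_const hbound) le_rfl)

end

theorem le_const_mul_one_add_mul_add {L T a M d p q e N : ℝ} (hL : 0 ≤ L) (hT : 0 ≤ T)
    (ha : 0 ≤ a) (hM : 0 ≤ M) (hd : 0 ≤ d) (hp : 0 ≤ p) (he : 1 ≤ e) (hinterp : q * d ≤ T * p)
    (h : N ≤ L * (1 + (a + L * T + M * q) * e) * d + M * p) :
    N ≤ (1 + L * (1 + T + L * T) * e) * (1 + a) * (d + M * p) := by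
  have hLTe : 0 ≤ L * T * e := by have := mul_nonneg hL hT; nlinarith
  have hLe : 0 ≤ L * (e - 1) := mul_nonneg hL (sub_nonneg.2 he)
  have hcoef₁ : L * (1 + (a + L * T) * e) ≤ (1 + L * (1 + T + L * T) * e) * (1 + a) := by
    nlinarith [mul_nonneg ha hLTe, mul_nonneg (mul_nonneg ha hL) hLTe]
  have hcoef₂ : 1 + L * T * e ≤ (1 + L * (1 + T + L * T) * e) * (1 + a) := by
    nlinarith [mul_nonneg ha hLTe, mul_nonneg (mul_nonneg ha hL) hLTe]
  calc N ≤ L * (1 + (a + L * T) * e) * d + L * e * M * (q * d) + M * p := by linarith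
    _ ≤ L * (1 + (a + L * T) * e) * d + L * e * M * (T * p) + M * p := by gcongr
    _ = L * (1 + (a + L * T) * e) * d + (1 + L * T * e) * (M * p) := by ring
    _ ≤ (1 + L * (1 + T + L * T) * e) * (1 + a) * d
        + (1 + L * (1 + T + L * T) * e) * (1 + a) * (M * p) := by gcongr
    _ = _ := by ring

/-- Pathwise Hölder estimate of Lemma 3.4: a continuous solution of
`Z_t = z + ∫₀ᵗ F(s, Z_s) ds + G(t)` with `F` Lipschitz and `G` `λ`-Hölder (constant `M`,
`G(0)=0`) satisfies `|Z_t - Z_s| ≤ C (1+|z|)(|t-s| + M |t-s|^λ)` with `C` depending only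
on `T`, `L` and `λ`. -/
theorem stmt_8 (m : ℕ) (T L lam : ℝ)
    (hT : 0 < T) (hL : 0 ≤ L) (hlam₀ : 0 < lam) (hlam₁ : lam ≤ 1) :
    ∃ C > (0:ℝ), ∀ (M : ℝ), 0 ≤ M → ∀ (z : EuclideanSpace ℝ (Fin m))
      (F : ℝ → EuclideanSpace ℝ (Fin m) → EuclideanSpace ℝ (Fin m))
      (G Z : ℝ → EuclideanSpace ℝ (Fin m)),
      Measurable (Function.uncurry F) →
      (∀ t ∈ Set.Icc (0:ℝ) T, ∀ z₁ z₂ : EuclideanSpace ℝ (Fin m),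
        ‖F t z₁ - F t z₂‖ ≤ L * ‖z₁ - z₂‖) →
      (∀ t ∈ Set.Icc (0:ℝ) T, ‖F t 0‖ ≤ L) →
      G 0 = 0 →
      (∀ s ∈ Set.Icc (0:ℝ) T, ∀ t ∈ Set.Icc (0:ℝ) T, ‖G t - G s‖ ≤ M * |t - s| ^ lam) →
      ContinuousOn Z (Set.Icc 0 T) →
      (∀ t ∈ Set.Icc (0:ℝ) T, Z t = z + (∫ s in (0:ℝ)..t, F s (Z s)) + G t) →
      ∀ s ∈ Set.Icc (0:ℝ) T, ∀ t ∈ Set.Icc (0:ℝ) T,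
        ‖Z t - Z s‖ ≤ C * (1 + ‖z‖) * (|t - s| + M * |t - s| ^ lam) := by
  refine ⟨1 + L * (1 + T + L * T) * exp (L * T), by positivity, ?_⟩
  intro M hM z F G Z hFm hFlip hF0 hG0 hG hZc hZeq s hs t ht
  have hgrowth : ∀ t ∈ Icc 0 T, ∀ x, ‖F t x‖ ≤ L * (1 + ‖x‖) := fun t ht =>
    norm_le_mul_one_add_norm (hFlip t ht) (hF0 t ht)
  have hint := integrableOn_Icc_of_norm_le_mul_one_add_norm hFm hgrowth hZc
  have hGbound : ∀ t ∈ Icc 0 T, ‖G t‖ ≤ M * T ^ lam := fun t ht => by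
    have h := hG 0 ⟨le_rfl, hT.le⟩ t ht
    rw [hG0, sub_zero, sub_zero, abs_of_nonneg ht.1] at h
    exact h.trans (mul_le_mul_of_nonneg_left (rpow_le_rpow ht.1 ht.2 hlam₀.le) hM)
  have hZbound := norm_le_of_eq_add_integral_add hL hgrowth hint hZc hGbound hZeq
  have hincr := norm_sub_le_of_eq_add_integral_add hL hgrowth hint hZbound hZeq hs ht
  have hinterp : T ^ lam * |t - s| ≤ T * |t - s| ^ lam :=
    rpow_mul_le_mul_rpow (abs_nonneg _)
      (abs_sub_le_iff.2 ⟨by linarith [hs.1, ht.2], by linarith [hs.2, ht.1]⟩) hlam₁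
  exact le_const_mul_one_add_mul_add hL hT.le (norm_nonneg z) hM (abs_nonneg _) (by positivity)
    (one_le_exp (by positivity)) hinterp (hincr.trans (add_le_add le_rfl (hG s hs t ht)))
end

section
/- Let $n\geq1$ be an integer and $T>0$. Then there exists a real polynomial $\alpha_1$ of degree at most $n+1$ such that $\alpha_1(0)=1$, $\alpha_1(T)=0$, and $\int_0^T\alpha_1(t)(T-t)^k\,dt=0$ for every $k=0,1,\dots,n-1$. Consequently, for every real $d_1\times d_1$ matrix $A$ with $A^{n}=0$ and every real $d_1\times d_2$ matrix $B$, one has $\int_0^T\alpha_1(t)\,e^{(T-t)A}B\,dt=0$. -/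
/-!
Take `α₁ = (L_n + L_{n+1}) / 2`, where `L_m` is the Legendre polynomial of degree `m` transported
to `[0, T]` and normalised by `L_m(0) = 1`, hence `L_m(T) = (-1)ᵐ`. Rodrigues' formula writes
`L_m` as the `m`-th derivative of a polynomial with zeros of order `m` at both endpoints, so `m`
integrations by parts show that `L_m` is orthogonal on `[0, T]` to every polynomial of degree
`< m`, in particular to `(T - t)ᵏ` for `k < n`. If `Aⁿ = 0`, every entry of `e^{(T-t)A} B` is a
linear combination of these `(T - t)ᵏ`.
-/

open MeasureTheory Matrix Polynomial Finset Nat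

theorem NormedSpace.exp_eq_sum_range_of_pow_eq_zero (𝕂 : Type*) {𝔸 : Type*} [Field 𝕂] [CharZero 𝕂]
    [Ring 𝔸] [Algebra 𝕂 𝔸] [TopologicalSpace 𝔸] [IsTopologicalRing 𝔸] {x : 𝔸} {n : ℕ}
    (hx : x ^ n = 0) : NormedSpace.exp x = ∑ k ∈ range n, (k !⁻¹ : 𝕂) • x ^ k := by
  rw [NormedSpace.exp_eq_tsum 𝕂]
  refine tsum_eq_sum fun k hk => ?_
  rw [pow_eq_zero_of_le (by simpa using hk) hx, smul_zero]

theorem Matrix.exp_smul_mul_apply_of_pow_eq_zero {m p : Type*} [Fintype m] [DecidableEq m]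
    {A : Matrix m m ℝ} {n : ℕ} (hA : A ^ n = 0) (B : Matrix m p ℝ) (s : ℝ) (i : m) (j : p) :
    (NormedSpace.exp (s • A) * B) i j = ∑ k ∈ range n, (A ^ k * B) i j / k ! * s ^ k := by
  have hsA : (s • A) ^ n = 0 := by rw [_root_.smul_pow, hA, smul_zero]
  rw [NormedSpace.exp_eq_sum_range_of_pow_eq_zero ℝ hsA, Matrix.sum_mul, Matrix.sum_apply]
  refine sum_congr rfl fun k _ => ?_
  rw [_root_.smul_pow, smul_smul, Matrix.smul_mul, Matrix.smul_apply, smul_eq_mul]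
  ring

theorem intervalIntegral.integral_mul_sum_pow_eq_zero {a b : ℝ} {f g : ℝ → ℝ} (hf : Continuous f)
    (hg : Continuous g) {n : ℕ} (hmom : ∀ k < n, ∫ t in a..b, f t * g t ^ k = 0) (c : ℕ → ℝ) :
    ∫ t in a..b, f t * ∑ k ∈ range n, c k * g t ^ k = 0 := by
  simp_rw [mul_sum, mul_left_comm (f _)]
  rw [intervalIntegral.integral_finsetSum fun k _ =>
    Continuous.intervalIntegrable (by fun_prop) a b]
  refine sum_eq_zero fun k hk => ?_
  rw [intervalIntegral.integral_const_mul, hmom k (mem_range.mp hk), mul_zero]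

theorem Polynomial.eval_iterate_derivative_X_sub_C_pow_mul {R : Type*} [CommRing R] (a : R)
    (m : ℕ) (q : R[X]) : (derivative^[m] ((X - C a) ^ m * q)).eval a = m ! * q.eval a := by
  rw [iterate_derivative_mul, eval_finsetSum, sum_eq_single_of_mem _ (mem_range.mpr m.succ_pos)]
  · rw [m.choose_zero_right, one_smul, eval_mul, m.sub_zero, iterate_derivative_X_sub_pow_self,
      eval_natCast, Function.iterate_zero_apply]
  · intro k hk hk0
    rw [iterate_derivative_X_sub_pow, eval_smul, eval_mul, eval_smul, eval_pow,
      Nat.sub_sub_self (mem_range_succ_iff.mp hk), eval_sub, eval_X, eval_C, sub_self,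
      zero_pow hk0, smul_zero, zero_mul, smul_zero]

theorem Polynomial.integral_iterate_derivative_mul_eq_zero {a b : ℝ} {u : ℝ[X]} {m : ℕ}
    (ha : (X - C a) ^ m ∣ u) (hb : (X - C b) ^ m ∣ u) {q : ℝ[X]} (hq : q.natDegree < m) :
    ∫ t in a..b, (derivative^[m] u).eval t * q.eval t = 0 := by
  induction m generalizing q with
  | zero => exact absurd hq (Nat.not_lt_zero _)
  | succ m ih =>
    have hroot : ∀ c, (X - C c) ^ (m + 1) ∣ u → (derivative^[m] u).eval c = 0 := fun c hc =>
      dvd_iff_isRoot.mp <| by simpa using pow_sub_dvd_iterate_derivative_of_pow_dvd m hc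
    have hparts := intervalIntegral.integral_deriv_mul_eq_sub (a := a) (b := b)
      (fun t _ => (derivative^[m] u).hasDerivAt t) (fun t _ => q.hasDerivAt t)
      ((derivative (derivative^[m] u)).continuous.intervalIntegrable _ _)
      ((derivative q).continuous.intervalIntegrable _ _)
    have hint (p r : ℝ[X]) : IntervalIntegrable (fun t => p.eval t * r.eval t) volume a b :=
      Continuous.intervalIntegrable (by fun_prop) a b
    have hlower : ∫ t in a..b, (derivative^[m] u).eval t * (derivative q).eval t = 0 := by
      rcases Nat.eq_zero_or_pos m with rfl | hm
      · simp [derivative_of_natDegree_zero (Nat.lt_one_iff.mp hq)]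
      · exact ih (dvd_trans (pow_dvd_pow _ m.le_succ) ha) (dvd_trans (pow_dvd_pow _ m.le_succ) hb)
          ((natDegree_derivative_le q).trans_lt (by omega))
    rw [intervalIntegral.integral_add (hint _ _) (hint _ _), hlower, hroot a ha, hroot b hb]
      at hparts
    simpa [Function.iterate_succ_apply'] using hparts

/-- Rodrigues' formula for `P_m ∘ φ`, where `P_m` is the Legendre polynomial and `φ` the affine map
with `φ a = 1`, `φ b = -1`. For `a = b` the normalising constant is the junk value `0⁻¹ = 0`. -/
noncomputable def Polynomial.legendreOn (a b : ℝ) (m : ℕ) : ℝ[X] :=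
  C (m ! * (a - b) ^ m)⁻¹ * derivative^[m] (((X - C a) * (X - C b)) ^ m)

namespace Polynomial

variable {a b : ℝ}

theorem legendreOn_eval_left (hab : a ≠ b) (m : ℕ) : (legendreOn a b m).eval a = 1 := by
  rw [legendreOn, eval_mul, eval_C, mul_pow, eval_iterate_derivative_X_sub_C_pow_mul, eval_pow,
    eval_sub, eval_X, eval_C]
  exact inv_mul_cancel₀ (by have := sub_ne_zero.mpr hab; positivity)

theorem legendreOn_eval_right (hab : a ≠ b) (m : ℕ) : (legendreOn a b m).eval b = (-1) ^ m := by
  rw [legendreOn, eval_mul, eval_C, mul_comm (X - C a), mul_pow,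
    eval_iterate_derivative_X_sub_C_pow_mul, eval_pow, eval_sub, eval_X, eval_C,
    show b - a = -(a - b) by ring, neg_pow]
  field_simp [sub_ne_zero.mpr hab]

theorem natDegree_legendreOn_le (a b : ℝ) (m : ℕ) : (legendreOn a b m).natDegree ≤ m := by
  have hquad : ((X - C a) * (X - C b)).natDegree ≤ 2 :=
    natDegree_mul_le.trans (Nat.add_le_add (natDegree_X_sub_C_le a) (natDegree_X_sub_C_le b))
  calc (legendreOn a b m).natDegree
      ≤ (((X - C a) * (X - C b)) ^ m).natDegree - m :=
        (natDegree_C_mul_le _ _).trans (natDegree_iterate_derivative _ _)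
    _ ≤ m * 2 - m := Nat.sub_le_sub_right (natDegree_pow_le_of_le m hquad) m
    _ = m := by omega

theorem integral_legendreOn_mul_eq_zero (m : ℕ) {q : ℝ[X]} (hq : q.natDegree < m) :
    ∫ t in a..b, (legendreOn a b m).eval t * q.eval t = 0 := by
  simp_rw [legendreOn, eval_mul, eval_C, mul_assoc]
  rw [intervalIntegral.integral_const_mul, integral_iterate_derivative_mul_eq_zero
    (by rw [mul_pow]; exact dvd_mul_right _ _) (by rw [mul_pow]; exact dvd_mul_left _ _) hq,
    mul_zero]

end Polynomial

theorem stmt_10_general (n : ℕ) (T : ℝ) (hT : 0 < T) :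
    ∃ α₁ : Polynomial ℝ, α₁.natDegree ≤ n + 1 ∧ α₁.eval 0 = 1 ∧ α₁.eval T = 0 ∧
      (∀ k : ℕ, k < n → ∫ t in (0:ℝ)..T, α₁.eval t * (T - t) ^ k = 0) ∧
      (∀ (d₁ d₂ : ℕ) (A : Matrix (Fin d₁) (Fin d₁) ℝ) (B : Matrix (Fin d₁) (Fin d₂) ℝ),
        A ^ n = 0 →
        ∀ i j, (∫ t in (0:ℝ)..T,
          α₁.eval t * ((NormedSpace.exp ((T - t) • A) * B) i j)) = 0) := by
  have hT0 : (0 : ℝ) ≠ T := hT.ne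
  set α₁ := C 2⁻¹ * (legendreOn 0 T n + legendreOn 0 T (n + 1))
  have hmoments : ∀ k < n, ∫ t in (0:ℝ)..T, α₁.eval t * (T - t) ^ k = 0 := by
    intro k hk
    have hlin : (C T - X).natDegree ≤ 1 := (natDegree_sub_le _ _).trans (by simp)
    have hq : ((C T - X) ^ k).natDegree < n := (natDegree_pow_le_of_le k hlin).trans_lt (by omega)
    have horth := fun m (hm : n ≤ m) => integral_legendreOn_mul_eq_zero (a := 0) (b := T) m
      (hq.trans_le hm)
    simp only [eval_pow, eval_sub, eval_C, eval_X] at horth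
    simp only [α₁, eval_mul, eval_C, eval_add, add_mul, mul_assoc]
    have hint (m : ℕ) : IntervalIntegrable (fun t => (legendreOn 0 T m).eval t * (T - t) ^ k)
        volume 0 T := Continuous.intervalIntegrable (by fun_prop) _ _
    rw [intervalIntegral.integral_const_mul, intervalIntegral.integral_add (hint n) (hint (n + 1)),
      horth n le_rfl, horth (n + 1) n.le_succ, add_zero, mul_zero]
  refine ⟨α₁, ?_, ?_, ?_, hmoments, ?_⟩
  · exact (natDegree_C_mul_le _ _).trans <| natDegree_add_le_of_degree_le
      ((natDegree_legendreOn_le 0 T n).trans n.le_succ) (natDegree_legendreOn_le 0 T (n + 1))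
  · simp only [α₁, eval_mul, eval_C, eval_add, legendreOn_eval_left hT0]
    norm_num
  · simp only [α₁, eval_mul, eval_C, eval_add, legendreOn_eval_right hT0, pow_succ]
    ring
  · intro d₁ d₂ A B hA i j
    simp_rw [Matrix.exp_smul_mul_apply_of_pow_eq_zero hA]
    exact intervalIntegral.integral_mul_sum_pow_eq_zero α₁.continuous (by fun_prop) hmoments _

/-- Construction of Section 5: a polynomial `α₁` of degree at most `n+1` with
`α₁(0)=1`, `α₁(T)=0` and vanishing moments `∫₀ᵀ α₁(t)(T-t)^k dt = 0` for `k < n`;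
consequently `∫₀ᵀ α₁(t) e^{(T-t)A} B dt = 0` whenever `Aⁿ = 0`. -/
theorem stmt_10 (n : ℕ) (hn : 1 ≤ n) (T : ℝ) (hT : 0 < T) :
    ∃ α₁ : Polynomial ℝ, α₁.natDegree ≤ n + 1 ∧ α₁.eval 0 = 1 ∧ α₁.eval T = 0 ∧
      (∀ k : ℕ, k < n → ∫ t in (0:ℝ)..T, α₁.eval t * (T - t) ^ k = 0) ∧
      (∀ (d₁ d₂ : ℕ) (A : Matrix (Fin d₁) (Fin d₁) ℝ) (B : Matrix (Fin d₁) (Fin d₂) ℝ),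
        A ^ n = 0 →
        ∀ i j, (∫ t in (0:ℝ)..T,
          α₁.eval t * ((NormedSpace.exp ((T - t) • A) * B) i j)) = 0) :=
  stmt_10_general n T hT
end

section
/- Let $(E,\mathcal{E})$ be a measurable space, $\mu$ a probability measure on $E$, $\kappa$ a Markov kernel from $E$ to $E$, and write $Pf(z)=\int_E f\,d\kappa(z,\cdot)$. Let $p>1$, let $\Phi:E\times E\to[0,\infty)$ be measurable, and assume: (i) for every bounded measurable $f\geq0$ and all $z,\hat z\in E$, $(Pf(z))^p\leq e^{\Phi(z,\hat z)}\,Pf^p(\hat z)$; (ii) there exists $\tilde K>0$ such that $\int_E Pf\,d\mu\leq\tilde K\int_E f\,d\mu$ for every bounded measurable $f\geq0$. Then for every $v>1$ and every bounded measurable $f\geq0$ with $\int_E f^p\,d\mu=1$, $\int_E\big(Pf(z)\big)^{vp}\,\mu(dz)\;\leq\;\tilde K^{v}\int_E\frac{\mu(dz)}{\big(\int_E e^{-\Phi(z,\hat z)}\,\mu(d\hat z)\big)^{v}}.$ -/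
/-!
Fix `z`. Multiplying the Harnack inequality by `e^{-Φ(z, ẑ)}` and integrating in `ẑ` against `μ`
gives `A(z) (Pf(z))^p ≤ μ(P f^p) ≤ K̃ μ(f^p) = K̃`, where `A(z) = ∫ e^{-Φ(z, ẑ)} μ(dẑ)`.
Hence `(Pf(z))^{vp} ≤ K̃^v A(z)^{-v}`, and it remains to integrate in `z`. Working in `ℝ≥0∞`
makes the bound trivially true where `A(z) = 0`.
-/

open MeasureTheory ProbabilityTheory ENNReal

lemma ENNReal.rpow_le_rpow_mul_rpow_neg_of_mul_le {a x k : ℝ≥0∞} {v : ℝ} (h : x * a ≤ k)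
    (hk0 : k ≠ 0) (hktop : k ≠ ∞) (hv : 0 ≤ v) : x ^ v ≤ k ^ v * a ^ (-v) := by
  have hx : x ≤ k / a := (ENNReal.le_div_iff_mul_le (Or.inr hk0) (Or.inr hktop)).2 h
  calc x ^ v ≤ (k / a) ^ v := ENNReal.rpow_le_rpow hx hv
    _ = k ^ v * a ^ (-v) := by
      rw [ENNReal.div_rpow_of_nonneg _ _ hv, ENNReal.rpow_neg, div_eq_mul_inv]

lemma Real.exp_neg_mul_le_of_le_exp_mul {φ x y : ℝ} (h : x ≤ Real.exp φ * y) :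
    Real.exp (-φ) * x ≤ y := by
  calc Real.exp (-φ) * x ≤ Real.exp (-φ) * (Real.exp φ * y) :=
        mul_le_mul_of_nonneg_left h (Real.exp_pos _).le
    _ = y := by rw [← mul_assoc, ← Real.exp_add, neg_add_cancel, Real.exp_zero, one_mul]

lemma MeasureTheory.lintegral_ofReal_exp_neg_mul_le {E : Type*} [MeasurableSpace E]
    {μ : Measure E} {φ b : E → ℝ} {x : ℝ} (hx : 0 ≤ x) (h : ∀ y, x ≤ Real.exp (φ y) * b y) :
    ENNReal.ofReal x * ∫⁻ y, ENNReal.ofReal (Real.exp (-φ y)) ∂μ ≤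
      ∫⁻ y, ENNReal.ofReal (b y) ∂μ := by
  rw [← lintegral_const_mul' _ _ ofReal_ne_top]
  refine lintegral_mono fun y => ?_
  rw [← ENNReal.ofReal_mul hx, mul_comm]
  exact ENNReal.ofReal_le_ofReal (Real.exp_neg_mul_le_of_le_exp_mul (h y))

lemma MeasureTheory.Integrable.integral_kernel_of_norm_le {α β F : Type*} [MeasurableSpace α]
    [MeasurableSpace β] [NormedAddCommGroup F] [NormedSpace ℝ F] {μ : Measure α}
    [IsFiniteMeasure μ] {κ : Kernel α β} [IsMarkovKernel κ] {f : β → F}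
    (hf : StronglyMeasurable f) {C : ℝ} (hC : ∀ y, ‖f y‖ ≤ C) :
    Integrable (fun x => ∫ y, f y ∂κ x) μ :=
  Integrable.of_bound hf.integral_kernel.aestronglyMeasurable C <| ae_of_all _ fun x => by
    simpa using norm_integral_le_of_norm_le_const (μ := κ x) (ae_of_all _ hC)

theorem stmt_11_general {E : Type*} [MeasurableSpace E]
    (μ : Measure E) [IsProbabilityMeasure μ]
    (κ : Kernel E E) [IsMarkovKernel κ]
    (p : ℝ) (hp : 1 < p)
    (Φ : E → E → ℝ)
    (harnack : ∀ f : E → ℝ, Measurable f → (∀ x, 0 ≤ f x) → (∃ c, ∀ x, f x ≤ c) →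
      ∀ z zh : E, (∫ x, f x ∂(κ z)) ^ p ≤ Real.exp (Φ z zh) * ∫ x, f x ^ p ∂(κ zh))
    (K : ℝ) (hK : 0 < K)
    (excessive : ∀ f : E → ℝ, Measurable f → (∀ x, 0 ≤ f x) → (∃ c, ∀ x, f x ≤ c) →
      ∫ z, (∫ x, f x ∂(κ z)) ∂μ ≤ K * ∫ x, f x ∂μ) :
    ∀ v : ℝ, 1 < v →
      ∀ f : E → ℝ, Measurable f → (∀ x, 0 ≤ f x) → (∃ c, ∀ x, f x ≤ c) →
      (∫ x, f x ^ p ∂μ) = 1 →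
      ∫⁻ z, ENNReal.ofReal ((∫ x, f x ∂(κ z)) ^ (v * p)) ∂μ ≤
        ENNReal.ofReal (K ^ v) *
          ∫⁻ z, (∫⁻ zh, ENNReal.ofReal (Real.exp (-Φ z zh)) ∂μ) ^ (-v) ∂μ := by
  intro v hv f hf hf0 ⟨c, hc⟩ hfp
  have hp0 : 0 ≤ p := by linarith
  have hv0 : 0 ≤ v := by linarith
  have hPf0 : ∀ z, 0 ≤ ∫ x, f x ∂κ z := fun z => integral_nonneg hf0
  have hfp0 : ∀ x, 0 ≤ f x ^ p := fun x => Real.rpow_nonneg (hf0 x) p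
  have hfpc : ∀ x, f x ^ p ≤ c ^ p := fun x => Real.rpow_le_rpow (hf0 x) (hc x) hp0
  have hPfp : ∫⁻ zh, ENNReal.ofReal (∫ x, f x ^ p ∂κ zh) ∂μ ≤ ENNReal.ofReal K := by
    have hint := Integrable.integral_kernel_of_norm_le (μ := μ) (κ := κ)
      (hf.pow_const p).stronglyMeasurable (C := c ^ p)
      fun x => by rw [Real.norm_of_nonneg (hfp0 x)]; exact hfpc x
    rw [← ofReal_integral_eq_lintegral_ofReal hint (ae_of_all _ fun z => integral_nonneg hfp0)]
    simpa [hfp] using ENNReal.ofReal_le_ofReal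
      (excessive _ (hf.pow_const p) hfp0 ⟨c ^ p, hfpc⟩)
  have hpoint : ∀ z, ENNReal.ofReal ((∫ x, f x ∂κ z) ^ (v * p)) ≤
      ENNReal.ofReal (K ^ v) * (∫⁻ zh, ENNReal.ofReal (Real.exp (-Φ z zh)) ∂μ) ^ (-v) := by
    intro z
    rw [mul_comm v, Real.rpow_mul (hPf0 z), ← ENNReal.ofReal_rpow_of_nonneg
      (Real.rpow_nonneg (hPf0 z) p) hv0, ← ENNReal.ofReal_rpow_of_nonneg hK.le hv0]
    exact ENNReal.rpow_le_rpow_mul_rpow_neg_of_mul_le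
      ((lintegral_ofReal_exp_neg_mul_le (Real.rpow_nonneg (hPf0 z) p)
        (harnack f hf hf0 ⟨c, hc⟩ z)).trans hPfp)
      (by simpa using hK) ofReal_ne_top hv0
  calc _ ≤ _ := lintegral_mono hpoint
    _ = _ := lintegral_const_mul' _ _ ofReal_ne_top

/-- Abstract hyperboundedness argument of Theorem 5.2(3): a Harnack inequality with power
`p > 1` for a Markov operator `P f (z) = ∫ f dκ(z,·)`, together with an excessive
probability measure `μ` (`μ(Pf) ≤ K̃ μ(f)`), yields the `L^p → L^{vp}` bound. -/
theorem stmt_11 {E : Type*} [MeasurableSpace E]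
    (μ : Measure E) [IsProbabilityMeasure μ]
    (κ : Kernel E E) [IsMarkovKernel κ]
    (p : ℝ) (hp : 1 < p)
    (Φ : E → E → ℝ) (hΦmeas : Measurable (Function.uncurry Φ))
    (hΦnonneg : ∀ z zh, 0 ≤ Φ z zh)
    (harnack : ∀ f : E → ℝ, Measurable f → (∀ x, 0 ≤ f x) → (∃ c, ∀ x, f x ≤ c) →
      ∀ z zh : E, (∫ x, f x ∂(κ z)) ^ p ≤ Real.exp (Φ z zh) * ∫ x, f x ^ p ∂(κ zh))
    (K : ℝ) (hK : 0 < K)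
    (excessive : ∀ f : E → ℝ, Measurable f → (∀ x, 0 ≤ f x) → (∃ c, ∀ x, f x ≤ c) →
      ∫ z, (∫ x, f x ∂(κ z)) ∂μ ≤ K * ∫ x, f x ∂μ) :
    ∀ v : ℝ, 1 < v →
      ∀ f : E → ℝ, Measurable f → (∀ x, 0 ≤ f x) → (∃ c, ∀ x, f x ≤ c) →
      (∫ x, f x ^ p ∂μ) = 1 →
      ∫⁻ z, ENNReal.ofReal ((∫ x, f x ∂(κ z)) ^ (v * p)) ∂μ ≤
        ENNReal.ofReal (K ^ v) *
          ∫⁻ z, (∫⁻ zh, ENNReal.ofReal (Real.exp (-Φ z zh)) ∂μ) ^ (-v) ∂μ :=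
  stmt_11_general μ κ p hp Φ harnack K hK excessive
end
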